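/- arXiv:1503.06757 — 4 statements merged into one kernel-verified Lean document; each statement's English description precedes it below -/
import Mathlib

section
/- In a K×L open grid graph, for any independent set σ and any horizontal stripe S_i (the union of rows 2i−2 and 2i−1), the number of occupied sites in S_i equals L (the maximum possible) if and only if σ restricted to S_i coincides either with the even sites of S_i or with the odd sites of S_i. -/
/-- Adjacency in the `K × L` open grid `G_{K,L}`: vertex set
`{0,…,L−1} × {0,…,K−1}` (first coordinate horizontal, second vertical),
edges between sites at ℓ1-distance 1, no wraparound. -/
def openAdj (K L : ℕ) (v w : Fin L × Fin K) : Prop :=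
  (v.2 = w.2 ∧ (v.1.val + 1 = w.1.val ∨ w.1.val + 1 = v.1.val)) ∨
  (v.1 = w.1 ∧ (v.2.val + 1 = w.2.val ∨ w.2.val + 1 = v.2.val))

theorem stripe_aux (K L : ℕ) (hL : 1 ≤ L) (a : ℕ) (ha : a + 1 < K)
    (σ : Finset (Fin L × Fin K))
    (hind : ∀ v ∈ σ, ∀ w ∈ σ, ¬ openAdj K L v w) :
    (σ.filter (fun v => v.2.val = a ∨ v.2.val = a + 1)).card = L ↔
      (σ.filter (fun v => v.2.val = a ∨ v.2.val = a + 1) =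
        Finset.univ.filter (fun v : Fin L × Fin K =>
          (v.2.val = a ∨ v.2.val = a + 1) ∧ (v.1.val + v.2.val) % 2 = 0) ∨
       σ.filter (fun v => v.2.val = a ∨ v.2.val = a + 1) =
        Finset.univ.filter (fun v : Fin L × Fin K =>
          (v.2.val = a ∨ v.2.val = a + 1) ∧ (v.1.val + v.2.val) % 2 = 1)) := by
  have hEcard : ∀ c, c < 2 → (Finset.univ.filter (fun v : Fin L × Fin K =>
      (v.2.val = a ∨ v.2.val = a + 1) ∧ (v.1.val + v.2.val) % 2 = c)).card = L := by
    intro c hc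
    have hb : (Finset.univ.filter (fun v : Fin L × Fin K =>
        (v.2.val = a ∨ v.2.val = a + 1) ∧ (v.1.val + v.2.val) % 2 = c)).card =
        (Finset.univ : Finset (Fin L)).card := by
      apply Finset.card_bij (fun v _ => v.1)
      · intro v _; exact Finset.mem_univ _
      · intro v hv w hw h
        simp only [Finset.mem_filter, Finset.mem_univ, true_and] at hv hw
        have h1 : v.1.val = w.1.val := congrArg Fin.val h
        have h2 : v.2 = w.2 := Fin.ext (by omega)
        exact Prod.ext h h2
      · intro j _
        by_cases hp : (j.val + a) % 2 = c
        · refine ⟨(j, ⟨a, by omega⟩), ?_, rfl⟩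
          simp only [Finset.mem_filter, Finset.mem_univ, true_and]
          exact ⟨Or.inl trivial, hp⟩
        · refine ⟨(j, ⟨a + 1, ha⟩), ?_, rfl⟩
          simp only [Finset.mem_filter, Finset.mem_univ, true_and]
          exact ⟨Or.inr trivial, by omega⟩
    simpa using hb
  constructor
  · intro hcard
    set T := σ.filter (fun v => v.2.val = a ∨ v.2.val = a + 1) with hTdef
    have hmem : ∀ v ∈ T, v ∈ σ ∧ (v.2.val = a ∨ v.2.val = a + 1) :=
      fun v hv => Finset.mem_filter.mp hv
    have hinjcol : ∀ v ∈ T, ∀ w ∈ T, v.1 = w.1 → v = w := by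
      intro v hv w hw h
      obtain ⟨hvσ, hvP⟩ := hmem v hv
      obtain ⟨hwσ, hwP⟩ := hmem w hw
      by_contra hne
      have hne2 : v.2.val ≠ w.2.val := by
        intro hh; exact hne (Prod.ext h (Fin.ext hh))
      exact hind v hvσ w hwσ (Or.inr ⟨h, by omega⟩)
    have himg : ∀ j : Fin L, ∃ v ∈ T, v.1 = j := by
      have h1 : (T.image Prod.fst).card = L := by
        rw [Finset.card_image_of_injOn (fun v hv w hw h => hinjcol v hv w hw h), hcard]
      have h2 : T.image Prod.fst = Finset.univ :=
        Finset.eq_univ_of_card _ (by simpa using h1)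
      intro j
      have hj : j ∈ T.image Prod.fst := h2 ▸ Finset.mem_univ j
      obtain ⟨v, hv, hvj⟩ := Finset.mem_image.mp hj
      exact ⟨v, hv, hvj⟩
    obtain ⟨v0, hv0, hv00⟩ := himg ⟨0, by omega⟩
    set c := (v0.1.val + v0.2.val) % 2 with hcdef
    have hpar : ∀ j : ℕ, ∀ v ∈ T, v.1.val = j → (v.1.val + v.2.val) % 2 = c := by
      intro j
      induction j with
      | zero =>
        intro v hv h0
        have hv10 : v.1 = v0.1 := by
          apply Fin.ext
          rw [h0, hv00]
        rw [hinjcol v hv v0 hv0 hv10]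
      | succ j ih =>
        intro v hv h
        have hjL : j < L := by have := v.1.isLt; omega
        obtain ⟨w, hw, hwj⟩ := himg ⟨j, hjL⟩
        have hwjv : w.1.val = j := by rw [hwj]
        have hwc : (w.1.val + w.2.val) % 2 = c := ih w hw hwjv
        obtain ⟨hvσ, hvP⟩ := hmem v hv
        obtain ⟨hwσ, hwP⟩ := hmem w hw
        have hne2 : v.2.val ≠ w.2.val := by
          intro hh
          exact hind v hvσ w hwσ (Or.inl ⟨Fin.ext hh, by omega⟩)
        omega
    have hTE : T = Finset.univ.filter (fun v : Fin L × Fin K =>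
        (v.2.val = a ∨ v.2.val = a + 1) ∧ (v.1.val + v.2.val) % 2 = c) := by
      ext v
      simp only [Finset.mem_filter, Finset.mem_univ, true_and]
      constructor
      · intro hv
        exact ⟨(hmem v hv).2, hpar v.1.val v hv rfl⟩
      · rintro ⟨hvP, hvc⟩
        obtain ⟨w, hw, hwj⟩ := himg v.1
        have hwc : (w.1.val + w.2.val) % 2 = c := hpar w.1.val w hw rfl
        obtain ⟨hwσ, hwP⟩ := hmem w hw
        have hwjv : w.1.val = v.1.val := congrArg Fin.val hwj
        have : w = v := Prod.ext hwj (Fin.ext (by omega))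
        exact this ▸ hw
    have hc2 : c = 0 ∨ c = 1 := by omega
    rcases hc2 with hc | hc
    · left; rw [hc] at hTE; exact hTE
    · right; rw [hc] at hTE; exact hTE
  · rintro (h | h) <;> rw [h]
    · exact hEcard 0 (by omega)
    · exact hEcard 1 (by omega)

/-- on the open grid, an independent set `σ` has `L` occupied sites
(the maximum) in the horizontal stripe `S_i = r_{2i−2} ∪ r_{2i−1}` iff `σ`
restricted to `S_i` coincides with the even sites of `S_i` or with the odd sites
of `S_i`. -/
theorem open_stripe_max_iff_double_bridge (K L : ℕ) (hK : 2 ≤ K) (hL : 2 ≤ L)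
    (σ : Finset (Fin L × Fin K))
    (hind : ∀ v ∈ σ, ∀ w ∈ σ, ¬ openAdj K L v w)
    (i : ℕ) (hi1 : 1 ≤ i) (hi2 : i ≤ K / 2) :
    (σ.filter (fun v => v.2.val = 2 * i - 2 ∨ v.2.val = 2 * i - 1)).card = L ↔
      (σ.filter (fun v => v.2.val = 2 * i - 2 ∨ v.2.val = 2 * i - 1) =
        Finset.univ.filter (fun v : Fin L × Fin K =>
          (v.2.val = 2 * i - 2 ∨ v.2.val = 2 * i - 1) ∧ (v.1.val + v.2.val) % 2 = 0) ∨
       σ.filter (fun v => v.2.val = 2 * i - 2 ∨ v.2.val = 2 * i - 1) =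
        Finset.univ.filter (fun v : Fin L × Fin K =>
          (v.2.val = 2 * i - 2 ∨ v.2.val = 2 * i - 1) ∧ (v.1.val + v.2.val) % 2 = 1)) := by
  have h21 : 2 * i - 1 = (2 * i - 2) + 1 := by omega
  simp only [h21]
  exact stripe_aux K L (by omega) (2 * i - 2) (by omega) σ hind
end

section
/- On a 2×L path-with-two-rows grid (one horizontal stripe of the open grid), if an independent set contains at least one even site and at least one odd site then it contains at most L−1 sites; equivalently, the only maximum independent sets (of size L) are the all-even and all-odd configurations. -/
/-- Adjacency in the `2 × L` grid graph: vertex set `{0,…,L−1} × {0,1}`,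
edges between vertices at ℓ1-distance 1. -/
def stripAdj (L : ℕ) (v w : Fin L × Fin 2) : Prop :=
  (v.2 = w.2 ∧ (v.1.val + 1 = w.1.val ∨ w.1.val + 1 = v.1.val)) ∨
  (v.1 = w.1 ∧ (v.2.val + 1 = w.2.val ∨ w.2.val + 1 = v.2.val))

/-!
An independent set has at most one site in each of the `L` columns. If it has exactly `L`
sites it meets every column, and the sites in neighbouring columns must lie in different
rows, which keeps the parity of `column + row` constant from one column to the next.
-/

def stripParity {L : ℕ} (v : Fin L × Fin 2) : ℕ := (v.1.val + v.2.val) % 2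

def sitesOfParity (L b : ℕ) : Finset (Fin L × Fin 2) :=
  Finset.univ.filter fun v => stripParity v = b

theorem mem_sitesOfParity {L b : ℕ} {v : Fin L × Fin 2} :
    v ∈ sitesOfParity L b ↔ stripParity v = b :=
  Finset.mem_filter_univ v

theorem card_sitesOfParity (L : ℕ) {b : ℕ} (hb : b < 2) : (sitesOfParity L b).card = L := by
  conv_rhs => rw [← Finset.card_fin L]
  refine Finset.card_bij' (fun v _ => v.1) (fun j _ => (j, ⟨(j.val + b) % 2, by omega⟩))
    (fun _ _ => Finset.mem_univ _) ?_ ?_ (fun _ _ => rfl)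
  · intro j _
    rw [mem_sitesOfParity]
    show (j.val + (j.val + b) % 2) % 2 = b
    omega
  · intro v hv
    rw [mem_sitesOfParity, stripParity] at hv
    exact Prod.ext rfl (Fin.ext (show (v.1.val + b) % 2 = v.2.val by omega))

section IndependentSet

variable {L : ℕ} {σ : Finset (Fin L × Fin 2)}

theorem injOn_fst_of_strip_indep (hσ : ∀ v ∈ σ, ∀ w ∈ σ, ¬ stripAdj L v w) :
    Set.InjOn Prod.fst (σ : Set (Fin L × Fin 2)) := by
  intro v hv w hw hcol
  by_contra hne
  have hrow : v.2.val ≠ w.2.val := fun hrow => hne (Prod.ext hcol (Fin.ext hrow))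
  exact hσ v hv w hw (Or.inr ⟨hcol, by omega⟩)

theorem card_le_of_strip_indep (hσ : ∀ v ∈ σ, ∀ w ∈ σ, ¬ stripAdj L v w) : σ.card ≤ L :=
  calc σ.card = (σ.image Prod.fst).card :=
        (Finset.card_image_of_injOn (injOn_fst_of_strip_indep hσ)).symm
    _ ≤ (Finset.univ : Finset (Fin L)).card := Finset.card_le_univ _
    _ = L := Finset.card_fin L

theorem exists_mem_column_of_card_eq (hσ : ∀ v ∈ σ, ∀ w ∈ σ, ¬ stripAdj L v w)
    (hcard : σ.card = L) (j : Fin L) : ∃ i, (j, i) ∈ σ := by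
  have himage : σ.image Prod.fst = Finset.univ := by
    apply Finset.eq_univ_of_card
    rw [Finset.card_image_of_injOn (injOn_fst_of_strip_indep hσ), hcard, Fintype.card_fin]
  obtain ⟨v, hv, rfl⟩ := Finset.mem_image.mp (himage ▸ Finset.mem_univ j)
  exact ⟨v.2, hv⟩

theorem stripParity_eq_of_succ_column (hσ : ∀ v ∈ σ, ∀ w ∈ σ, ¬ stripAdj L v w)
    {v w : Fin L × Fin 2} (hv : v ∈ σ) (hw : w ∈ σ) (hcol : v.1.val + 1 = w.1.val) :
    stripParity v = stripParity w := by
  have hrow : v.2.val ≠ w.2.val := fun hrow => hσ v hv w hw (Or.inl ⟨Fin.ext hrow, Or.inl hcol⟩)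
  have := v.2.isLt
  have := w.2.isLt
  unfold stripParity
  omega

theorem stripParity_eq_of_card_eq (hσ : ∀ v ∈ σ, ∀ w ∈ σ, ¬ stripAdj L v w)
    (hcard : σ.card = L) {v w : Fin L × Fin 2} (hv : v ∈ σ) (hw : w ∈ σ) :
    stripParity v = stripParity w := by
  have walk : ∀ k, ∀ v ∈ σ, ∀ w ∈ σ, w.1.val = v.1.val + k → stripParity v = stripParity w := by
    intro k
    induction k with
    | zero =>
      intro v hv w hw hcol
      rw [injOn_fst_of_strip_indep hσ hv hw (Fin.ext hcol.symm)]
    | succ k ih =>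
      intro v hv w hw hcol
      obtain ⟨i, hu⟩ := exists_mem_column_of_card_eq hσ hcard ⟨v.1.val + k, by omega⟩
      exact (ih v hv _ hu rfl).trans (stripParity_eq_of_succ_column hσ hu hw (by simp only; omega))
  rcases le_total v.1.val w.1.val with hle | hle
  · obtain ⟨k, hk⟩ := Nat.exists_eq_add_of_le hle
    exact walk k v hv w hw hk
  · obtain ⟨k, hk⟩ := Nat.exists_eq_add_of_le hle
    exact (walk k w hw v hv hk).symm

theorem eq_sitesOfParity_of_card_eq (hσ : ∀ v ∈ σ, ∀ w ∈ σ, ¬ stripAdj L v w)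
    (hcard : σ.card = L) : σ = sitesOfParity L 0 ∨ σ = sitesOfParity L 1 := by
  have hsub : ∀ b < 2, (∀ v ∈ σ, stripParity v = b) → σ = sitesOfParity L b := fun b hb hσb =>
    Finset.eq_of_subset_of_card_le (fun v hv => mem_sitesOfParity.mpr (hσb v hv))
      (by rw [card_sitesOfParity L hb, hcard])
  rcases σ.eq_empty_or_nonempty with rfl | ⟨v₀, hv₀⟩
  · exact Or.inl (hsub 0 (by norm_num) (by simp))
  · have hconst : ∀ v ∈ σ, stripParity v = stripParity v₀ :=
      fun v hv => stripParity_eq_of_card_eq hσ hcard hv hv₀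
    rcases Nat.mod_two_eq_zero_or_one (v₀.1.val + v₀.2.val) with h | h
    · exact Or.inl (hsub 0 (by norm_num) fun v hv => (hconst v hv).trans h)
    · exact Or.inr (hsub 1 (by norm_num) fun v hv => (hconst v hv).trans h)

end IndependentSet

theorem strip_max_independent_sets_general (L : ℕ)
    (σ : Finset (Fin L × Fin 2))
    (hind : ∀ v ∈ σ, ∀ w ∈ σ, ¬ stripAdj L v w) :
    ((∃ v ∈ σ, (v.1.val + v.2.val) % 2 = 0) ∧ (∃ v ∈ σ, (v.1.val + v.2.val) % 2 = 1) →
      σ.card ≤ L - 1) ∧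
    (σ.card = L ↔
      σ = Finset.univ.filter (fun v : Fin L × Fin 2 => (v.1.val + v.2.val) % 2 = 0) ∨
      σ = Finset.univ.filter (fun v : Fin L × Fin 2 => (v.1.val + v.2.val) % 2 = 1)) := by
  refine ⟨?_, ⟨eq_sitesOfParity_of_card_eq hind, ?_⟩⟩
  · rintro ⟨⟨v, hv, hv0⟩, ⟨w, hw, hw1⟩⟩
    have hne : σ.card ≠ L := fun hcard => by
      have := stripParity_eq_of_card_eq hind hcard hv hw
      unfold stripParity at this
      omega
    have := card_le_of_strip_indep hind
    omega
  · rintro (rfl | rfl)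
    exacts [card_sitesOfParity L (by norm_num), card_sitesOfParity L (by norm_num)]

/-- on the `2 × L` grid, an independent set containing at least one
even site and at least one odd site has at most `L − 1` sites; equivalently, the
only maximum independent sets (of size `L`) are the all-even and the all-odd
configurations. -/
theorem strip_max_independent_sets (L : ℕ) (hL : 2 ≤ L)
    (σ : Finset (Fin L × Fin 2))
    (hind : ∀ v ∈ σ, ∀ w ∈ σ, ¬ stripAdj L v w) :
    ((∃ v ∈ σ, (v.1.val + v.2.val) % 2 = 0) ∧ (∃ v ∈ σ, (v.1.val + v.2.val) % 2 = 1) →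
      σ.card ≤ L - 1) ∧
    (σ.card = L ↔
      σ = Finset.univ.filter (fun v : Fin L × Fin 2 => (v.1.val + v.2.val) % 2 = 0) ∨
      σ = Finset.univ.filter (fun v : Fin L × Fin 2 => (v.1.val + v.2.val) % 2 = 1)) :=
  strip_max_independent_sets_general L σ hind
end

section
/- Given an energy landscape, any two cycles are either disjoint or comparable by inclusion: if C and C' are cycles then C ∩ C' = ∅, or C ⊆ C', or C' ⊆ C. -/
/- Abstract energy landscape: finite state space `X`, energy `H`, connectivity `q`. -/

variable {X : Type*}

/-- A path from `x` to `y`: a nonempty finite sequence of states with consecutive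
states connected by `q`. -/
def IsPath (q : X → X → Prop) (ω : List X) (x y : X) : Prop :=
  ω ≠ [] ∧ ω.Chain' q ∧ ω.head? = some x ∧ ω.getLast? = some y

/-- The elevation (height) of a path: the maximal energy along it. -/
noncomputable def elev (H : X → ℝ) (ω : List X) : ℝ :=
  sSup (H '' {z | z ∈ ω})

/-- The communication energy between two states: the minimal elevation over paths. -/
noncomputable def commE (H : X → ℝ) (q : X → X → Prop) (x y : X) : ℝ :=
  sInf {e | ∃ ω, IsPath q ω x y ∧ elev H ω = e}

/-- The communication energy between two sets of states. -/
noncomputable def commSet (H : X → ℝ) (q : X → X → Prop) (A B : Set X) : ℝ :=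
  sInf {e | ∃ x ∈ A, ∃ y ∈ B, commE H q x y = e}

/-- A set of states is connected if any two of its states are joined by a path inside it. -/
def SetConn (q : X → X → Prop) (C : Set X) : Prop :=
  ∀ x ∈ C, ∀ y ∈ C, ∃ ω, IsPath q ω x y ∧ ∀ z ∈ ω, z ∈ C

/-- The external boundary of a set of states. -/
def extBdry (q : X → X → Prop) (C : Set X) : Set X :=
  {y | y ∉ C ∧ ∃ x ∈ C, q x y}

/-- A non-trivial cycle: a connected set whose maximal internal energy is strictly
below the minimal energy on its external boundary. -/
def IsNontrivialCycle (H : X → ℝ) (q : X → X → Prop) (C : Set X) : Prop :=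
  C.Nonempty ∧ SetConn q C ∧ sSup (H '' C) < sInf (H '' extBdry q C)

/-- A cycle: a singleton, or a non-trivial cycle. -/
def IsCycle (H : X → ℝ) (q : X → X → Prop) (C : Set X) : Prop :=
  (∃ x, C = {x}) ∨ IsNontrivialCycle H q C

/-!
Suppose two non-trivial cycles `C`, `C'` meet but neither contains the other. A path inside `C`
from a common point to a point of `C \ C'` must leave `C'`, so `C` contains a boundary point
`a` of `C'`; symmetrically `C'` contains a boundary point `a'` of `C`. The cycle condition then
gives `H a < H a'` and `H a' < H a`.
-/

section

variable {q : X → X → Prop}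

lemma IsPath.exists_rel_of_mem_of_not_mem {S : Set X} :
    ∀ {ω : List X} {x y : X}, IsPath q ω x y → x ∈ S → y ∉ S →
      ∃ a ∈ S, ∃ b ∈ ω, b ∉ S ∧ q a b
  | [], _, _, ⟨hne, _⟩, _, _ => absurd rfl hne
  | [a], x, y, ⟨_, _, hx, hy⟩, hxS, hyS => by
      simp only [List.head?_cons, List.getLast?_singleton, Option.some.injEq] at hx hy
      subst hx hy
      exact absurd hxS hyS
  | a :: b :: t, x, y, ⟨_, hch, hx, hy⟩, hxS, hyS => by
      simp only [List.head?_cons, Option.some.injEq] at hx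
      subst hx
      obtain ⟨hab, htl⟩ := List.isChain_cons_cons.1 hch
      by_cases hbS : b ∈ S
      · have htail : IsPath q (b :: t) b y :=
          ⟨List.cons_ne_nil _ _, htl, rfl, by rwa [List.getLast?_cons_cons] at hy⟩
        obtain ⟨a', ha'S, b', hb', hb'S, hq⟩ := htail.exists_rel_of_mem_of_not_mem hbS hyS
        exact ⟨a', ha'S, b', List.mem_cons_of_mem _ hb', hb'S, hq⟩
      · exact ⟨a, hxS, b, by simp, hbS, hab⟩

lemma SetConn.exists_mem_extBdry {C D : Set X} (hC : SetConn q C) {z x : X}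
    (hzC : z ∈ C) (hzD : z ∈ D) (hxC : x ∈ C) (hxD : x ∉ D) :
    ∃ b ∈ C, b ∈ extBdry q D := by
  obtain ⟨ω, hω, hωC⟩ := hC z hzC x hxC
  obtain ⟨a, haD, b, hbω, hbD, hab⟩ := hω.exists_rel_of_mem_of_not_mem hzD hxD
  exact ⟨b, hωC b hbω, hbD, a, haD, hab⟩

lemma IsNontrivialCycle.energy_lt_of_mem_extBdry [Finite X] {H : X → ℝ} {C : Set X}
    (hC : IsNontrivialCycle H q C) {a b : X} (ha : a ∈ C) (hb : b ∈ extBdry q C) :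
    H a < H b :=
  calc H a ≤ sSup (H '' C) := le_csSup (C.toFinite.image H).bddAbove ⟨a, ha, rfl⟩
    _ < sInf (H '' extBdry q C) := hC.2.2
    _ ≤ H b := csInf_le ((extBdry q C).toFinite.image H).bddBelow ⟨b, hb, rfl⟩

theorem IsNontrivialCycle.inter_eq_empty_or_subset_or_subset [Finite X] {H : X → ℝ}
    {C C' : Set X} (hC : IsNontrivialCycle H q C) (hC' : IsNontrivialCycle H q C') :
    C ∩ C' = ∅ ∨ C ⊆ C' ∨ C' ⊆ C := by
  by_contra! h
  obtain ⟨⟨z, hzC, hzC'⟩, hCC', hC'C⟩ := h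
  obtain ⟨x, hxC, hxC'⟩ := Set.not_subset.1 hCC'
  obtain ⟨y, hyC', hyC⟩ := Set.not_subset.1 hC'C
  obtain ⟨a, haC, ha⟩ := hC.2.1.exists_mem_extBdry hzC hzC' hxC hxC'
  obtain ⟨a', ha'C', ha'⟩ := hC'.2.1.exists_mem_extBdry hzC' hzC hyC' hyC
  exact (hC.energy_lt_of_mem_extBdry haC ha').asymm (hC'.energy_lt_of_mem_extBdry ha'C' ha)

lemma Set.singleton_inter_eq_empty_or_subset_or_subset (x : X) (D : Set X) :
    {x} ∩ D = ∅ ∨ {x} ⊆ D ∨ D ⊆ {x} := by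
  by_cases hx : x ∈ D
  · exact Or.inr (Or.inl (Set.singleton_subset_iff.2 hx))
  · exact Or.inl (Set.singleton_inter_eq_empty.2 hx)

end

theorem cycle_tree_structure_general [Fintype X] (H : X → ℝ) (q : X → X → Prop)
    (C C' : Set X) (hC : IsCycle H q C) (hC' : IsCycle H q C') :
    C ∩ C' = ∅ ∨ C ⊆ C' ∨ C' ⊆ C := by
  rcases hC with ⟨x, rfl⟩ | hC
  · exact Set.singleton_inter_eq_empty_or_subset_or_subset x C'
  rcases hC' with ⟨y, rfl⟩ | hC'
  · rw [Set.inter_comm, or_comm (a := C ⊆ {y})]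
    exact Set.singleton_inter_eq_empty_or_subset_or_subset y C
  exact hC.inter_eq_empty_or_subset_or_subset hC'

/-- two cycles are either disjoint or comparable for inclusion. -/
theorem cycle_tree_structure [Fintype X] (H : X → ℝ) (q : X → X → Prop)
    (hsymm : ∀ x y, q x y → q y x)
    (hirr : ∀ x y : X, ∃ ω, IsPath q ω x y)
    (C C' : Set X) (hC : IsCycle H q C) (hC' : IsCycle H q C') :
    C ∩ C' = ∅ ∨ C ⊆ C' ∨ C' ⊆ C :=
  cycle_tree_structure_general H q C C' hC hC'
end

section
/- Given a nonempty target set A ⊆ X and a state x ∉ A, the initial cycle C_A(x) := {x} ∪ {z ∈ X : Φ(x,z) < Φ(x,A)} is a cycle of the energy landscape, and it is disjoint from A. Moreover, the collection {C_A(x)}_{x ∈ X∖A} forms the partition of X∖A into maximal cycles contained in X∖A. -/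
/- Abstract energy landscape: finite state space `X`, energy `H`, connectivity `q`. -/

variable {X : Type*}

/-- The communication energy between a state and a set of states. -/
noncomputable def commA (H : X → ℝ) (q : X → X → Prop) (x : X) (A : Set X) : ℝ :=
  sInf {e | ∃ y ∈ A, commE H q x y = e}

/-- The initial cycle `C_A(x) = {x} ∪ {z : Φ(x,z) < Φ(x,A)}`. -/
def initCycle (H : X → ℝ) (q : X → X → Prop) (A : Set X) (x : X) : Set X :=
  {x} ∪ {z | commE H q x z < commA H q x A}

/-- `C` is a maximal cycle contained in `B`. -/
def MaxCycleIn (H : X → ℝ) (q : X → X → Prop) (B C : Set X) : Prop :=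
  IsCycle H q C ∧ C ⊆ B ∧ ∀ C', IsCycle H q C' → C' ⊆ B → C ⊆ C' → C' = C

/-!
Put `Φ = Φ(x, A)`. Apart from `x` itself, `C_A(x)` consists of the states reachable from `x`
along paths staying strictly below `Φ`. Such a sublevel component is connected, lies below `Φ`,
and its boundary lies at or above `Φ`, so it is a cycle; if `H x ≥ Φ` the component is empty and
`C_A(x) = {x}`. Conversely, a cycle in `X ∖ A` through `x` lies strictly below its boundary, which
every path from `x` to `A` crosses, so it lies below `Φ` and is contained in `C_A(x)`. Hence
`C_A(x)` is maximal, and a maximal cycle is the initial cycle of any of its points.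
-/

namespace IsPath

variable {q : X → X → Prop} {ω ω₁ ω₂ : List X} {x y z : X}

theorem head_mem (h : IsPath q ω x y) : x ∈ ω :=
  List.mem_of_mem_head? h.2.2.1

theorem getLast_mem (h : IsPath q ω x y) : y ∈ ω :=
  List.mem_of_mem_getLast? h.2.2.2

theorem singleton (q : X → X → Prop) (x : X) : IsPath q [x] x x :=
  ⟨List.cons_ne_nil _ _, List.isChain_singleton _, rfl, rfl⟩

theorem pair (hxy : q x y) : IsPath q [x, y] x y :=
  ⟨List.cons_ne_nil _ _, List.isChain_pair.mpr hxy, rfl, rfl⟩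

theorem reverse (hsymm : ∀ x y, q x y → q y x) (h : IsPath q ω x y) :
    IsPath q ω.reverse y x := by
  obtain ⟨hne, hch, hx, hy⟩ := h
  refine ⟨List.reverse_ne_nil_iff.mpr hne, ?_, by rwa [List.head?_reverse],
    by rwa [List.getLast?_reverse]⟩
  exact List.isChain_reverse.mpr (hch.imp fun a b => hsymm a b)

theorem append (h₁ : IsPath q ω₁ x y) (h₂ : IsPath q ω₂ y z) :
    IsPath q (ω₁ ++ ω₂.tail) x z := by
  obtain ⟨hne₁, hch₁, hx, hy₁⟩ := h₁
  obtain ⟨hne₂, hch₂, hy₂, hz⟩ := h₂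
  obtain ⟨b, t, rfl⟩ := List.exists_cons_of_ne_nil hne₂
  obtain rfl : b = y := by simpa using hy₂
  refine ⟨by simp [hne₁], hch₁.append hch₂.tail ?_, by simp [List.head?_append, hx], ?_⟩
  · intro a ha c hc
    obtain rfl : b = a := by simpa [hy₁] using ha
    exact List.isChain_cons.mp hch₂ |>.1 c hc
  · cases t with
    | nil => simpa [hy₁] using hz
    | cons c t => simpa [List.getLast?_append] using hz

theorem mem_append_tail (hw : z ∈ ω₁ ++ ω₂.tail) : z ∈ ω₁ ∨ z ∈ ω₂ :=
  (List.mem_append.mp hw).imp_right List.mem_of_mem_tail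

theorem concat (h : IsPath q ω x y) (hyz : q y z) : IsPath q (ω ++ [z]) x z :=
  h.append (pair hyz)

theorem exists_prefix (h : IsPath q ω x y) (hz : z ∈ ω) :
    ∃ ω', IsPath q ω' x z ∧ ∀ w ∈ ω', w ∈ ω := by
  obtain ⟨-, hch, hx, -⟩ := h
  obtain ⟨l₁, l₂, rfl⟩ := List.append_of_mem hz
  refine ⟨l₁ ++ [z], ⟨by simp, hch.prefix ⟨l₂, by simp⟩, ?_, List.getLast?_concat⟩, ?_⟩
  · cases l₁ <;> simpa using hx
  · intro w hw
    simp only [List.mem_append, List.mem_cons] at hw ⊢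
    tauto

theorem exists_mem_extBdry (h : IsPath q ω x y) {C : Set X} (hx : x ∈ C) (hy : y ∉ C) :
    ∃ b ∈ ω, b ∈ extBdry q C := by
  by_contra! hbdry
  obtain ⟨hne, hch, hxω, hyω⟩ := h
  refine hy (List.IsChain.induction (· ∈ C) ω (List.IsChain.iff_mem.mp hch) ?_ ?_ y
    (List.mem_of_mem_getLast? hyω))
  · rintro a b ⟨-, hb, hab⟩ ha
    by_contra hbC
    exact hbdry b hb ⟨hbC, a, ha, hab⟩
  · intro _
    rwa [(List.head_eq_iff_head?_eq_some _).mpr hxω]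

end IsPath

section Elevation

variable [Finite X] {H : X → ℝ} {q : X → X → Prop} {ω : List X} {x y : X} {c : ℝ}

theorem le_elev {z : X} (hz : z ∈ ω) : H z ≤ elev H ω :=
  le_csSup (Set.toFinite _).bddAbove ⟨z, hz, rfl⟩

theorem elev_lt_iff (hω : ω ≠ []) : elev H ω < c ↔ ∀ z ∈ ω, H z < c := by
  obtain ⟨a, ha⟩ := List.exists_mem_of_ne_nil ω hω
  rw [elev, (Set.toFinite (H '' {z | z ∈ ω})).csSup_lt_iff ⟨H a, a, ha, rfl⟩,
    Set.forall_mem_image]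
  rfl

variable (H q x y) in
theorem finite_pathElevs : {e | ∃ ω, IsPath q ω x y ∧ elev H ω = e}.Finite :=
  (Set.finite_range fun S : Set X => sSup (H '' S)).subset fun _ ⟨ω, _, he⟩ => ⟨{z | z ∈ ω}, he⟩

theorem commE_le_elev (h : IsPath q ω x y) : commE H q x y ≤ elev H ω :=
  csInf_le (finite_pathElevs H q x y).bddBelow ⟨ω, h, rfl⟩

end Elevation

section CommunicationEnergy

variable [Finite X] {H : X → ℝ} {q : X → X → Prop} {x y : X} {c : ℝ}

theorem exists_isPath_elev_eq_commE (hxy : ∃ ω, IsPath q ω x y) :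
    ∃ ω, IsPath q ω x y ∧ elev H ω = commE H q x y := by
  obtain ⟨ω, hω⟩ := hxy
  exact Set.Nonempty.csInf_mem (s := {e | ∃ ω, IsPath q ω x y ∧ elev H ω = e})
    ⟨_, ω, hω, rfl⟩ (finite_pathElevs H q x y)

theorem commE_lt_iff (hxy : ∃ ω, IsPath q ω x y) :
    commE H q x y < c ↔ ∃ ω, IsPath q ω x y ∧ ∀ z ∈ ω, H z < c := by
  constructor
  · intro hlt
    obtain ⟨ω, hω, he⟩ := exists_isPath_elev_eq_commE (H := H) hxy
    exact ⟨ω, hω, (elev_lt_iff hω.1).mp (he ▸ hlt)⟩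
  · rintro ⟨ω, hω, hlt⟩
    exact (commE_le_elev hω).trans_lt ((elev_lt_iff hω.1).mpr hlt)

theorem sInf_extBdry_le_commE (hxy : ∃ ω, IsPath q ω x y) {C : Set X} (hx : x ∈ C)
    (hy : y ∉ C) : sInf (H '' extBdry q C) ≤ commE H q x y := by
  obtain ⟨ω, hω, he⟩ := exists_isPath_elev_eq_commE (H := H) hxy
  obtain ⟨b, hbω, hb⟩ := hω.exists_mem_extBdry hx hy
  calc sInf (H '' extBdry q C) ≤ H b := csInf_le (Set.toFinite _).bddBelow ⟨b, hb, rfl⟩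
    _ ≤ elev H ω := le_elev hbω
    _ = commE H q x y := he

theorem commA_le_commE {A : Set X} (hy : y ∈ A) : commA H q x A ≤ commE H q x y :=
  csInf_le (Set.toFinite (commE H q x '' A)).bddBelow ⟨y, hy, rfl⟩

theorem exists_mem_commE_eq_commA {A : Set X} (hA : A.Nonempty) :
    ∃ y ∈ A, commE H q x y = commA H q x A :=
  (hA.image (commE H q x)).csInf_mem (Set.toFinite _)

end CommunicationEnergy

def sublevelComponent (H : X → ℝ) (q : X → X → Prop) (c : ℝ) (x : X) : Set X :=
  {z | ∃ ω, IsPath q ω x z ∧ ∀ u ∈ ω, H u < c}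

section SublevelComponent

variable {H : X → ℝ} {q : X → X → Prop} {c : ℝ} {x y z : X}

theorem self_mem_sublevelComponent (hx : H x < c) : x ∈ sublevelComponent H q c x :=
  ⟨[x], IsPath.singleton q x, by simpa⟩

theorem energy_self_lt_of_mem_sublevelComponent (hz : z ∈ sublevelComponent H q c x) :
    H x < c :=
  have ⟨_, hω, hlt⟩ := hz
  hlt x hω.head_mem

theorem energy_lt_of_mem_sublevelComponent (hz : z ∈ sublevelComponent H q c x) : H z < c :=
  have ⟨_, hω, hlt⟩ := hz
  hlt z hω.getLast_mem

theorem mem_sublevelComponent_of_mem_path {ω : List X} (hω : IsPath q ω x y)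
    (hlt : ∀ u ∈ ω, H u < c) (hz : z ∈ ω) : z ∈ sublevelComponent H q c x :=
  have ⟨ω', hω', hsub⟩ := hω.exists_prefix hz
  ⟨ω', hω', fun u hu => hlt u (hsub u hu)⟩

theorem setConn_sublevelComponent (hsymm : ∀ x y, q x y → q y x) :
    SetConn q (sublevelComponent H q c x) := by
  rintro y₁ ⟨ω₁, hω₁, hlt₁⟩ y₂ ⟨ω₂, hω₂, hlt₂⟩
  refine ⟨_, (hω₁.reverse hsymm).append hω₂, fun u hu => ?_⟩
  rcases IsPath.mem_append_tail hu with hu | hu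
  · exact mem_sublevelComponent_of_mem_path hω₁ hlt₁ (List.mem_reverse.mp hu)
  · exact mem_sublevelComponent_of_mem_path hω₂ hlt₂ hu

theorem le_of_mem_extBdry_sublevelComponent
    (hb : y ∈ extBdry q (sublevelComponent H q c x)) : c ≤ H y := by
  obtain ⟨hyS, w, ⟨ω, hω, hlt⟩, hwy⟩ := hb
  by_contra! hy
  refine hyS ⟨ω ++ [y], hω.concat hwy, fun u hu => ?_⟩
  rcases List.mem_append.mp hu with hu | hu
  · exact hlt u hu
  · rwa [List.mem_singleton.mp hu]

theorem subset_sublevelComponent {C : Set X} (hconn : SetConn q C) (hx : x ∈ C)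
    (hC : ∀ z ∈ C, H z < c) : C ⊆ sublevelComponent H q c x := fun z hz =>
  have ⟨ω, hω, hωC⟩ := hconn x hx z hz
  ⟨ω, hω, fun u hu => hC u (hωC u hu)⟩

theorem isNontrivialCycle_sublevelComponent [Finite X] (hsymm : ∀ x y, q x y → q y x)
    (hx : H x < c) (hy : y ∉ sublevelComponent H q c x) (hxy : ∃ ω, IsPath q ω x y) :
    IsNontrivialCycle H q (sublevelComponent H q c x) := by
  have hxS := self_mem_sublevelComponent (q := q) hx
  -- a nonempty boundary is essential: `sInf ∅ = 0` in `ℝ`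
  obtain ⟨ω, hω⟩ := hxy
  obtain ⟨b, -, hb⟩ := hω.exists_mem_extBdry hxS hy
  refine ⟨⟨x, hxS⟩, setConn_sublevelComponent hsymm, ?_⟩
  calc sSup (H '' sublevelComponent H q c x) < c :=
        ((Set.toFinite _).csSup_lt_iff (Set.Nonempty.image H ⟨x, hxS⟩)).mpr <|
          Set.forall_mem_image.mpr fun _ hz => energy_lt_of_mem_sublevelComponent hz
    _ ≤ sInf (H '' extBdry q (sublevelComponent H q c x)) :=
        le_csInf (Set.Nonempty.image H ⟨b, hb⟩) <| Set.forall_mem_image.mpr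
          fun _ hz => le_of_mem_extBdry_sublevelComponent hz

end SublevelComponent

theorem IsCycle.nonempty {H : X → ℝ} {q : X → X → Prop} {C : Set X} (hC : IsCycle H q C) :
    C.Nonempty := by
  rcases hC with ⟨x, rfl⟩ | hC
  exacts [Set.singleton_nonempty x, hC.1]

section InitialCycle

variable [Finite X] {H : X → ℝ} {q : X → X → Prop} {A : Set X} {x : X}

theorem initCycle_subset_compl (hx : x ∉ A) : initCycle H q A x ⊆ Aᶜ := by
  rintro z (rfl | hz) hzA
  · exact hx hzA
  · exact (commA_le_commE hzA).not_gt hz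

theorem initCycle_eq_union_sublevelComponent (hirr : ∀ z, ∃ ω, IsPath q ω x z) :
    initCycle H q A x = {x} ∪ sublevelComponent H q (commA H q x A) x := by
  ext z
  exact or_congr_right (commE_lt_iff (hirr z))

theorem initCycle_isCycle (hsymm : ∀ x y, q x y → q y x) (hirr : ∀ z, ∃ ω, IsPath q ω x z)
    (hA : A.Nonempty) : IsCycle H q (initCycle H q A x) := by
  rw [initCycle_eq_union_sublevelComponent hirr]
  by_cases hx : H x < commA H q x A
  · right
    rw [Set.union_eq_right.mpr (Set.singleton_subset_iff.mpr (self_mem_sublevelComponent hx))]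
    obtain ⟨a, ha⟩ := hA
    refine isNontrivialCycle_sublevelComponent hsymm hx (fun haS => ?_) (hirr a)
    exact ((commE_lt_iff (hirr a)).mpr haS).not_ge (commA_le_commE ha)
  · left
    exact ⟨x, Set.union_eq_left.mpr fun z hz =>
      (hx (energy_self_lt_of_mem_sublevelComponent hz)).elim⟩

/-- Every path from `x` to `A` crosses the boundary of `C`, so `Φ(x, A)` exceeds every energy
in `C`. -/
theorem subset_initCycle_of_isCycle (hirr : ∀ z, ∃ ω, IsPath q ω x z) (hA : A.Nonempty)
    {C : Set X} (hC : IsCycle H q C) (hx : x ∈ C) (hCA : C ⊆ Aᶜ) : C ⊆ initCycle H q A x := by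
  rcases hC with ⟨w, rfl⟩ | ⟨-, hconn, hlt⟩
  · obtain rfl : x = w := hx
    exact Set.singleton_subset_iff.mpr (Set.mem_union_left _ rfl)
  obtain ⟨a, haA, ha⟩ := exists_mem_commE_eq_commA (H := H) (q := q) (x := x) hA
  have hbarrier : sInf (H '' extBdry q C) ≤ commA H q x A :=
    ha ▸ sInf_extBdry_le_commE (hirr a) hx fun haC => hCA haC haA
  rw [initCycle_eq_union_sublevelComponent hirr]
  refine Set.subset_union_of_subset_right (subset_sublevelComponent hconn hx fun z hz => ?_) _
  calc H z ≤ sSup (H '' C) := le_csSup (Set.toFinite _).bddAbove ⟨z, hz, rfl⟩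
    _ < sInf (H '' extBdry q C) := hlt
    _ ≤ commA H q x A := hbarrier

theorem maxCycleIn_initCycle (hsymm : ∀ x y, q x y → q y x)
    (hirr : ∀ z, ∃ ω, IsPath q ω x z) (hA : A.Nonempty) (hx : x ∉ A) :
    MaxCycleIn H q Aᶜ (initCycle H q A x) :=
  ⟨initCycle_isCycle hsymm hirr hA, initCycle_subset_compl hx, fun _ hC hCA hsub =>
    (subset_initCycle_of_isCycle hirr hA hC (hsub (Set.mem_union_left _ rfl)) hCA).antisymm hsub⟩

end InitialCycle

/-- for `x ∉ A` the initial cycle `C_A(x)` is a cycle disjoint from `A`,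
and the collection `{C_A(x)}_{x ∉ A}` is precisely the collection of maximal cycles
contained in `X∖A` (hence the partition of `X∖A` into maximal cycles). -/
theorem initial_cycles_partition [Fintype X] (H : X → ℝ) (q : X → X → Prop)
    (hsymm : ∀ x y, q x y → q y x)
    (hirr : ∀ x y : X, ∃ ω, IsPath q ω x y)
    (A : Set X) (hA : A.Nonempty) :
    (∀ x ∉ A, IsCycle H q (initCycle H q A x) ∧ initCycle H q A x ∩ A = ∅) ∧
    {C : Set X | ∃ x ∉ A, C = initCycle H q A x} = {C : Set X | MaxCycleIn H q Aᶜ C} := by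
  refine ⟨fun x hx => ⟨initCycle_isCycle hsymm (hirr x) hA,
    Set.disjoint_iff_inter_eq_empty.mp (Set.subset_compl_iff_disjoint_right.mp
      (initCycle_subset_compl hx))⟩, ?_⟩
  ext C
  constructor
  · rintro ⟨x, hx, rfl⟩
    exact maxCycleIn_initCycle hsymm (hirr x) hA hx
  · rintro ⟨hC, hCA, hmax⟩
    obtain ⟨x, hx⟩ := hC.nonempty
    have hsub : C ⊆ initCycle H q A x := subset_initCycle_of_isCycle (hirr x) hA hC hx hCA
    exact ⟨x, hCA hx, (hmax _ (initCycle_isCycle hsymm (hirr x) hA)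
      (initCycle_subset_compl (hCA hx)) hsub).symm⟩
end
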